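/- Let X ∈ ℝ^{D×P} and U ∈ ℝ^{D×D} orthonormal. If β* minimizes ‖β‖_{1,2} subject to I_D = Xβ, then β*U⁻¹ minimizes ‖β‖_{1,2} subject to I_D = (UX)β; consequently the set of rows with nonzero norm (the support) of the minimizers is the same for X and UX. -/

import Mathlib

/-! Right multiplication by an orthogonal matrix preserves every row norm, since the squared
row norms are the diagonal of `β * βᵀ`. It therefore preserves `‖·‖_{1,2}` and the support, and
`β ↦ β * U` is a bijection from the solutions of `1 = (U * X) * β` onto those of `1 = X * β`. -/

open Matrix

noncomputable def rowNorm {P D : ℕ} (β : Matrix (Fin P) (Fin D) ℝ) (p : Fin P) : ℝ :=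
  Real.sqrt (∑ j, (β p j) ^ 2)

noncomputable def norm12 {P D : ℕ} (β : Matrix (Fin P) (Fin D) ℝ) : ℝ :=
  ∑ p, rowNorm β p

def support {P D : ℕ} (β : Matrix (Fin P) (Fin D) ℝ) : Set (Fin P) :=
  {p | 0 < rowNorm β p}

section OrthogonalInvariance

variable {P D : ℕ}

lemma rowNorm_eq_sqrt_mul_transpose (β : Matrix (Fin P) (Fin D) ℝ) (p : Fin P) :
    rowNorm β p = √((β * βᵀ) p p) := by
  simp [rowNorm, mul_apply, sq]

lemma rowNorm_mul_of_mul_transpose_eq_one (β : Matrix (Fin P) (Fin D) ℝ)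
    {V : Matrix (Fin D) (Fin D) ℝ} (hV : V * Vᵀ = 1) (p : Fin P) :
    rowNorm (β * V) p = rowNorm β p := by
  rw [rowNorm_eq_sqrt_mul_transpose, rowNorm_eq_sqrt_mul_transpose, transpose_mul,
    Matrix.mul_assoc, ← Matrix.mul_assoc V, hV, Matrix.one_mul]

lemma norm12_mul_of_mul_transpose_eq_one (β : Matrix (Fin P) (Fin D) ℝ)
    {V : Matrix (Fin D) (Fin D) ℝ} (hV : V * Vᵀ = 1) :
    norm12 (β * V) = norm12 β :=
  Finset.sum_congr rfl fun p _ => rowNorm_mul_of_mul_transpose_eq_one β hV p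

lemma support_mul_of_mul_transpose_eq_one (β : Matrix (Fin P) (Fin D) ℝ)
    {V : Matrix (Fin D) (Fin D) ℝ} (hV : V * Vᵀ = 1) :
    support (β * V) = support β := by
  ext p
  simp only [support, Set.mem_ofPred_eq, rowNorm_mul_of_mul_transpose_eq_one β hV]

end OrthogonalInvariance

lemma one_eq_mul_mul_iff_of_transpose_mul_eq_one {R m n : Type*} [CommRing R] [Fintype m]
    [DecidableEq m] [Fintype n] {X : Matrix m n R} {U : Matrix m m R} (hU : Uᵀ * U = 1)
    (β : Matrix n m R) :
    (1 : Matrix m m R) = (U * X) * β ↔ 1 = X * (β * U) := by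
  have hU' : U * Uᵀ = 1 := mul_eq_one_comm.mp hU
  constructor
  · intro h
    calc (1 : Matrix m m R) = Uᵀ * ((U * X) * β) * U := by rw [← h, Matrix.mul_one, hU]
      _ = X * (β * U) := by simp only [← Matrix.mul_assoc, hU, Matrix.one_mul]
  · intro h
    calc (1 : Matrix m m R) = U * (X * (β * U)) * Uᵀ := by rw [← h, Matrix.mul_one, hU']
      _ = (U * X) * β := by simp only [Matrix.mul_assoc, hU', Matrix.mul_one]

theorem minimizer_rotated {D P : ℕ}
    (X : Matrix (Fin D) (Fin P) ℝ)
    (U : Matrix (Fin D) (Fin D) ℝ) (hU : Uᵀ * U = 1)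
    (βstar : Matrix (Fin P) (Fin D) ℝ)
    (hfeas : (1 : Matrix (Fin D) (Fin D) ℝ) = X * βstar)
    (hmin : ∀ β : Matrix (Fin P) (Fin D) ℝ,
      (1 : Matrix (Fin D) (Fin D) ℝ) = X * β → norm12 βstar ≤ norm12 β) :
    ((1 : Matrix (Fin D) (Fin D) ℝ) = (U * X) * (βstar * U⁻¹) ∧
      ∀ β : Matrix (Fin P) (Fin D) ℝ,
        (1 : Matrix (Fin D) (Fin D) ℝ) = (U * X) * β → norm12 (βstar * U⁻¹) ≤ norm12 β) ∧
    support (βstar * U⁻¹) = support βstar := by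
  have hU' : U * Uᵀ = 1 := mul_eq_one_comm.mp hU
  have hUt : Uᵀ * Uᵀᵀ = 1 := by rwa [transpose_transpose]
  rw [inv_eq_right_inv hU', norm12_mul_of_mul_transpose_eq_one βstar hUt,
    support_mul_of_mul_transpose_eq_one βstar hUt]
  refine ⟨⟨?_, fun β hβ => ?_⟩, rfl⟩
  · rwa [one_eq_mul_mul_iff_of_transpose_mul_eq_one hU, Matrix.mul_assoc, hU, Matrix.mul_one]
  · rw [← norm12_mul_of_mul_transpose_eq_one β hU']
    exact hmin _ ((one_eq_mul_mul_iff_of_transpose_mul_eq_one hU β).mp hβ)
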